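/- Let n ≥ 1, m ≥ 2 and let c be any real number with c < n. For every deterministic online allocation algorithm — that is, for every family of functions a_i : (ℝ^m)^i → Fin m for i = 1, …, n, where user i is assigned to basestation a_i(row_1, …, row_i) based on the weight rows revealed so far — there exists a nonnegative weight matrix w : Fin n → Fin m → ℝ such that the optimal offline utility max_g TS(g, w) exceeds c times the utility TS(f_a, w) of the online allocation f_a. In particular, no online algorithm has worst-case competitive ratio below n for arbitrary weights. -/

import Mathlib

/-!
The adversary only ever puts weight on one basestation `j₀`, offering user `i` the weight `L ^ i`
(the "ladder"). Feed the full ladder to the algorithm. If it sends some user `k` away from `j₀`,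
cut the ladder after `k`: by causality the algorithm still sends `k` away, so the online utility
is at most `1 + L + ⋯ + L ^ (k - 1) < L ^ k / (L - 1)`, whereas isolating `k` on `j₀` earns `L ^ k`.
Otherwise all users share `j₀` and the online utility is the average `(1 + ⋯ + L ^ (n - 1)) / n`,
while isolating the last user earns `L ^ (n - 1)`. For `L` large in terms of `c` and `n / (n - c)`
both ratios exceed `c`.
-/

/-- Time-sharing utility of an allocation `f` of `n` users to `m` basestations with
weights `w i j`: each basestation's contribution is the sum of weights of its users
divided by its degree (empty basestations contribute `0`, via `0/0 = 0`). -/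
noncomputable def TS {n m : ℕ} (f : Fin n → Fin m) (w : Fin n → Fin m → ℝ) : ℝ :=
  ∑ j : Fin m, (∑ i ∈ Finset.univ.filter (fun i => f i = j), w i j) /
    ((Finset.univ.filter (fun i => f i = j)).card : ℝ)

open Finset

section TimeSharing

variable {n m : ℕ}

lemma TS_nonneg (f : Fin n → Fin m) {w : Fin n → Fin m → ℝ} (hw : ∀ i j, 0 ≤ w i j) :
    0 ≤ TS f w :=
  sum_nonneg fun j _ => div_nonneg (sum_nonneg fun i _ => hw i j) (Nat.cast_nonneg _)

lemma TS_le_sum (f : Fin n → Fin m) {w : Fin n → Fin m → ℝ} (hw : ∀ i j, 0 ≤ w i j) :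
    TS f w ≤ ∑ i, w i (f i) := by
  calc TS f w ≤ ∑ j, ∑ i ∈ univ.filter (fun i => f i = j), w i j := by
        refine sum_le_sum fun j _ => ?_
        rcases Nat.eq_zero_or_pos (univ.filter (fun i => f i = j)).card with h | h
        · rw [h, Nat.cast_zero, div_zero]
          exact sum_nonneg fun i _ => hw i j
        · exact div_le_self (sum_nonneg fun i _ => hw i j) (by exact_mod_cast h)
    _ = ∑ j, ∑ i ∈ univ.filter (fun i => f i = j), w i (f i) :=
        sum_congr rfl fun j _ => sum_congr rfl fun i hi => by rw [(mem_filter.1 hi).2]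
    _ = ∑ i, w i (f i) := sum_fiberwise _ _ _

lemma TS_of_supported {w : Fin n → Fin m → ℝ} {j₀ : Fin m} (hw : ∀ i j, j ≠ j₀ → w i j = 0)
    (f : Fin n → Fin m) :
    TS f w = (∑ i ∈ univ.filter (fun i => f i = j₀), w i j₀) /
      ((univ.filter (fun i => f i = j₀)).card : ℝ) := by
  refine sum_eq_single j₀ (fun j _ hj => ?_) (fun h => absurd (mem_univ j₀) h)
  simp [hw _ _ hj]

lemma TS_isolate {w : Fin n → Fin m → ℝ} {j₀ j₁ : Fin m} (hw : ∀ i j, j ≠ j₀ → w i j = 0)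
    (hj : j₁ ≠ j₀) (k : Fin n) :
    TS (fun i => if i = k then j₀ else j₁) w = w k j₀ := by
  have hfiber : univ.filter (fun i => (if i = k then j₀ else j₁) = j₀) = {k} := by
    ext i
    by_cases hi : i = k <;> simp [hi, hj]
  rw [TS_of_supported hw, hfiber, sum_singleton, card_singleton, Nat.cast_one, div_one]

end TimeSharing

section Online

variable {n m : ℕ}

def onlineAlloc (a : (i : Fin n) → (Fin ((i : ℕ) + 1) → Fin m → ℝ) → Fin m)
    (w : Fin n → Fin m → ℝ) : Fin n → Fin m :=
  fun i => a i (fun j => w ⟨j, Nat.lt_of_lt_of_le j.isLt i.isLt⟩)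

lemma onlineAlloc_congr (a : (i : Fin n) → (Fin ((i : ℕ) + 1) → Fin m → ℝ) → Fin m)
    {w w' : Fin n → Fin m → ℝ} {i : Fin n} (h : ∀ j ≤ i, w j = w' j) :
    onlineAlloc a w i = onlineAlloc a w' i := by
  unfold onlineAlloc
  congr 1
  funext j
  exact h _ (Nat.lt_succ_iff.mp j.isLt)

end Online

section Ladder

variable {n m : ℕ}

def ladder (L : ℝ) (j₀ : Fin m) (k : Fin n) : Fin n → Fin m → ℝ :=
  fun i j => if j = j₀ ∧ i ≤ k then L ^ (i : ℕ) else 0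

variable {L : ℝ} {j₀ : Fin m} {k : Fin n}

lemma ladder_nonneg (hL : 0 ≤ L) (i : Fin n) (j : Fin m) : 0 ≤ ladder L j₀ k i j := by
  unfold ladder
  split_ifs
  exacts [pow_nonneg hL _, le_rfl]

lemma ladder_supported : ∀ i j, j ≠ j₀ → ladder L j₀ k i j = 0 := by
  intro i j hj
  simp [ladder, hj]

lemma ladder_eq_of_le {k' : Fin n} {i : Fin n} (hk : i ≤ k) (hk' : i ≤ k') :
    ladder L j₀ k i = ladder L j₀ k' i := by
  funext j
  simp [ladder, hk, hk']

lemma TS_ladder_last_of_forall_eq {f : Fin (n + 1) → Fin m} (hf : ∀ i, f i = j₀) :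
    TS f (ladder L j₀ (Fin.last n)) = (∑ i ∈ range (n + 1), L ^ i) / (n + 1) := by
  have hfiber : univ.filter (fun i => f i = j₀) = univ := filter_true_of_mem fun i _ => hf i
  rw [TS_of_supported ladder_supported, hfiber, card_univ, Fintype.card_fin,
    ← Fin.sum_univ_eq_sum_range]
  simp [ladder, Fin.le_last]

lemma TS_ladder_le_geom_sum (hL : 0 ≤ L) {f : Fin n → Fin m} (hf : f k ≠ j₀) :
    TS f (ladder L j₀ k) ≤ ∑ i ∈ range k, L ^ i :=
  calc TS f (ladder L j₀ k) ≤ ∑ i, ladder L j₀ k i (f i) := TS_le_sum f (ladder_nonneg hL)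
    _ ≤ ∑ i, if i < k then L ^ (i : ℕ) else 0 := by
        refine sum_le_sum fun i _ => ?_
        unfold ladder
        split_ifs with hi hik
        · exact le_rfl
        · exact absurd (le_antisymm hi.2 (not_lt.mp hik) ▸ hi.1) hf
        · exact pow_nonneg hL _
        · exact le_rfl
    _ = ∑ i ∈ Iio k, L ^ (i : ℕ) := by
        rw [← sum_filter]
        congr 1
        ext i
        simp
    _ = ∑ i ∈ range k, L ^ i := by
        rw [← Nat.Iio_eq_range, ← Fin.map_valEmbedding_Iio, sum_map]
        rfl

end Ladder

section Arithmetic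

variable {L c : ℝ}

lemma mul_geom_sum_lt_pow (hL : 0 ≤ L) (hc : c ≤ L - 1) (k : ℕ) :
    c * ∑ i ∈ range k, L ^ i < L ^ k :=
  calc c * ∑ i ∈ range k, L ^ i ≤ (∑ i ∈ range k, L ^ i) * (L - 1) := by
        rw [mul_comm]
        exact mul_le_mul_of_nonneg_left hc (sum_nonneg fun i _ => pow_nonneg hL i)
    _ = L ^ k - 1 := geom_sum_mul L k
    _ < L ^ k := sub_one_lt _

lemma mul_geom_sum_div_lt_pow {N : ℕ} (hc : 0 < c) (hL : 1 < L)
    (hcL : c * L ≤ (N + 1) * (L - 1)) :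
    c * ((∑ i ∈ range (N + 1), L ^ i) / (N + 1)) < L ^ N := by
  have hL1 : 0 < L - 1 := sub_pos.mpr hL
  have hpow : 0 < L ^ N := pow_pos (by linarith) N
  rw [mul_div_assoc', div_lt_iff₀ (by positivity)]
  refine lt_of_mul_lt_mul_right ?_ hL1.le
  calc c * (∑ i ∈ range (N + 1), L ^ i) * (L - 1) = c * (L ^ (N + 1) - 1) := by
        rw [mul_assoc, geom_sum_mul]
    _ < c * L * L ^ N := by rw [pow_succ]; nlinarith
    _ ≤ (N + 1) * (L - 1) * L ^ N := mul_le_mul_of_nonneg_right hcL hpow.le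
    _ = L ^ N * (N + 1) * (L - 1) := by ring

lemma exists_ladder_base {N : ℝ} (hc : 0 < c) (hcN : c < N) :
    ∃ L : ℝ, 1 < L ∧ c ≤ L - 1 ∧ c * L ≤ N * (L - 1) := by
  have hd : 0 < N - c := sub_pos.mpr hcN
  have hL : (N / (N - c) + c) * (N - c) = N + c * (N - c) := by field_simp
  have h1 : 1 ≤ N / (N - c) := (one_le_div hd).mpr (by linarith)
  refine ⟨N / (N - c) + c, by linarith, by linarith, ?_⟩
  nlinarith [mul_pos hc hd]

end Arithmetic

theorem exists_online_lt_offline {n m : ℕ} {c : ℝ} (hc : 0 < c) (hcn : c < n + 1)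
    {j₀ j₁ : Fin m} (hj : j₁ ≠ j₀)
    (a : (i : Fin (n + 1)) → (Fin ((i : ℕ) + 1) → Fin m → ℝ) → Fin m) :
    ∃ w : Fin (n + 1) → Fin m → ℝ, (∀ i j, 0 ≤ w i j) ∧
      ∃ g : Fin (n + 1) → Fin m, c * TS (onlineAlloc a w) w < TS g w := by
  obtain ⟨L, hL, hcL, hcLn⟩ := exists_ladder_base hc hcn
  have hL0 : 0 ≤ L := by linarith
  by_cases hall : ∀ i, onlineAlloc a (ladder L j₀ (Fin.last n)) i = j₀
  · refine ⟨ladder L j₀ (Fin.last n), ladder_nonneg hL0,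
      fun i => if i = Fin.last n then j₀ else j₁, ?_⟩
    rw [TS_isolate ladder_supported hj (Fin.last n), TS_ladder_last_of_forall_eq hall]
    simpa [ladder] using mul_geom_sum_div_lt_pow hc hL hcLn
  · obtain ⟨k, hk⟩ := not_forall.mp hall
    have hk' : onlineAlloc a (ladder L j₀ k) k ≠ j₀ := by
      rwa [onlineAlloc_congr a fun i hi => ladder_eq_of_le hi (Fin.le_last i)]
    refine ⟨ladder L j₀ k, ladder_nonneg hL0, fun i => if i = k then j₀ else j₁, ?_⟩
    rw [TS_isolate ladder_supported hj k]
    calc c * TS (onlineAlloc a (ladder L j₀ k)) (ladder L j₀ k)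
        ≤ c * ∑ i ∈ range k, L ^ i :=
          mul_le_mul_of_nonneg_left (TS_ladder_le_geom_sum hL0 hk') hc.le
      _ < L ^ (k : ℕ) := mul_geom_sum_lt_pow hL0 hcL k
      _ = ladder L j₀ k k j₀ := by simp [ladder]

/-- arbitrary weights, worst case. For every `c < n` and every deterministic
online algorithm `a` (user `i` is assigned to `a i (row 0, …, row i)`, depending only on
the weight rows revealed so far), there is a nonnegative weight matrix `w` such that the
optimal offline utility exceeds `c` times the online utility. -/
theorem stmt5 (n m : ℕ) (hn : 1 ≤ n) (hm : 2 ≤ m) (c : ℝ) (hc : c < (n : ℝ))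
    (a : (i : Fin n) → (Fin ((i : ℕ) + 1) → Fin m → ℝ) → Fin m) :
    ∃ w : Fin n → Fin m → ℝ, (∀ i j, 0 ≤ w i j) ∧
      ∃ g : Fin n → Fin m,
        c * TS (fun i : Fin n =>
              a i (fun j : Fin ((i : ℕ) + 1) =>
                w ⟨(j : ℕ), Nat.lt_of_lt_of_le j.isLt i.isLt⟩)) w
          < TS g w := by
  obtain ⟨n, rfl⟩ : ∃ n', n = n' + 1 := ⟨n - 1, by omega⟩
  push_cast at hc
  set c' := max c ((n + 1) / 2)
  have hc'0 : 0 < c' := lt_max_of_lt_right (by positivity)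
  have hc' : c' < n + 1 := max_lt hc (by linarith [(n.cast_nonneg : (0 : ℝ) ≤ n)])
  obtain ⟨w, hw, g, hlt⟩ :=
    exists_online_lt_offline hc'0 hc' (j₀ := ⟨0, by omega⟩) (j₁ := ⟨1, by omega⟩) (by simp) a
  refine ⟨w, hw, g, lt_of_le_of_lt ?_ hlt⟩
  exact mul_le_mul_of_nonneg_right (le_max_left _ _) (TS_nonneg _ hw)
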